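/- Let Π : ℝ^m → M_m(ℝ) be a C¹ matrix-valued map that is skew-symmetric at every point and satisfies the Jacobi identity in coordinates: Σ_{l=1}^m (Π^{il}(z) ∂Π^{jk}/∂z^l (z) + Π^{kl}(z) ∂Π^{ij}/∂z^l (z) + Π^{jl}(z) ∂Π^{ki}/∂z^l (z)) = 0 for all i, j, k and all z. Let H : ℝ^m → ℝ be C², and let Φ : ℝ × ℝ^m → ℝ^m be a C² map with Φ(0, z) = z and ∂Φ/∂t (t, z) = Π(Φ(t, z)) ∇H(Φ(t, z)) for all (t, z). Then the flow preserves the Poisson structure: for all t and z, D_zΦ(t, z) Π(z) D_zΦ(t, z)ᵀ = Π(Φ(t, z)). -/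

import Mathlib

open Matrix

/-- The Euclidean gradient of `H : ℝ^m → ℝ` at `z`. -/
noncomputable def grad {m : ℕ} (H : (Fin m → ℝ) → ℝ) (z : Fin m → ℝ) : Fin m → ℝ :=
  fun i => fderiv ℝ H z (Pi.single i 1)

/-- The partial derivative in the `l`-th coordinate direction of `F : ℝ^m → ℝ`. -/
noncomputable def pd {m : ℕ} (l : Fin m) (F : (Fin m → ℝ) → ℝ) (z : Fin m → ℝ) : ℝ :=
  fderiv ℝ F z (Pi.single l 1)

/-- The `m × m` Jacobian matrix of `ψ : ℝ^m → ℝ^m` at `z`. -/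
noncomputable def jacobian {m : ℕ} (ψ : (Fin m → ℝ) → (Fin m → ℝ)) (z : Fin m → ℝ) :
    Matrix (Fin m) (Fin m) ℝ :=
  Matrix.of fun i j => fderiv ℝ ψ z (Pi.single j 1) i

/-!
Write `X = Π ∇H`, `U(t) = D_zΦ(t, z)` and `J(t) = DX(Φ(t, z))`. Differentiating the flow
equation in `z` and exchanging the mixed partial derivatives of `Φ` gives the variational
equation `U' = J U`, `U(0) = 1`. Skew-symmetry of `Π`, symmetry of the Hessian of `H` and the
Jacobi identity say precisely that the Lie derivative of `Π` along `X` vanishes,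
`∑ₗ Xˡ ∂ₗΠ = DX Π + Π DXᵀ`; hence `Q(t) = Π(Φ(t, z))` solves `Q' = J Q + Q Jᵀ`. So does
`U Π(z) Uᵀ`, with the same initial value, and the difference solves a linear ODE with continuous
coefficients starting at `0`, so it vanishes by uniqueness of solutions.
-/

open Finset Set
open scoped Matrix.Norms.Elementwise

theorem Matrix.hasDerivAt_iff {m n : Type*} [Fintype n] {A : ℝ → Matrix m n ℝ}
    {A' : Matrix m n ℝ} {t : ℝ} :
    HasDerivAt A A' t ↔ ∀ i j, HasDerivAt (fun s => A s i j) (A' i j) t :=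
  hasDerivAt_pi.trans (forall_congr' fun _ => hasDerivAt_pi)

theorem HasDerivAt.matrix_mul {l m n : Type*} [Fintype m] [Fintype n]
    {A : ℝ → Matrix l m ℝ} {B : ℝ → Matrix m n ℝ} {A' : Matrix l m ℝ} {B' : Matrix m n ℝ}
    {t : ℝ} (hA : HasDerivAt A A' t) (hB : HasDerivAt B B' t) :
    HasDerivAt (fun s => A s * B s) (A' * B t + A t * B') t := by
  rw [Matrix.hasDerivAt_iff] at *
  intro i k
  simp only [Matrix.mul_apply, Matrix.add_apply, ← Finset.sum_add_distrib]
  exact HasDerivAt.fun_sum fun j _ => (hA i j).fun_mul (hB j k)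

theorem HasDerivAt.matrix_transpose {m n : Type*} [Fintype m] [Fintype n]
    {A : ℝ → Matrix m n ℝ} {A' : Matrix m n ℝ} {t : ℝ} (hA : HasDerivAt A A' t) :
    HasDerivAt (fun s => (A s)ᵀ) A'ᵀ t := by
  rw [Matrix.hasDerivAt_iff] at *
  exact fun i j => hA j i

theorem eq_zero_of_hasDerivAt_clm_apply {E : Type*} [NormedAddCommGroup E] [NormedSpace ℝ E]
    {L : ℝ → E →L[ℝ] E} (hL : Continuous L) {A : ℝ → E}
    (hA : ∀ s, HasDerivAt A (L s (A s)) s) (hA0 : A 0 = 0) (t : ℝ) : A t = 0 := by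
  set c := |t| + 1
  obtain ⟨K, hK⟩ :=
    (isCompact_Icc (a := -c) (b := c)).exists_bound_of_continuousOn hL.continuousOn
  have hlip : ∀ s ∈ Ioo (-c) c, LipschitzOnWith K.toNNReal (L s) univ := fun s hs =>
    ((L s).lipschitz.weaken (by
      simpa [← NNReal.coe_le_coe] using
        (hK s (Ioo_subset_Icc_self hs)).trans (le_max_left K 0))).lipschitzOnWith
  refine ODE_solution_unique_of_mem_Ioo hlip (t₀ := 0) ?_ (fun s _ => ⟨hA s, mem_univ _⟩)
    (g := 0) (fun s _ => ⟨by simp, mem_univ _⟩) hA0 ?_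
  · constructor <;> linarith [abs_nonneg t]
  · constructor <;> linarith [neg_abs_le t, le_abs_self t]

namespace Matrix

variable {n : Type*} [Fintype n] [DecidableEq n]

theorem eq_zero_of_hasDerivAt_mul_add_mul_transpose {J A : ℝ → Matrix n n ℝ}
    (hJ : Continuous J) (hA : ∀ s, HasDerivAt A (J s * A s + A s * (J s)ᵀ) s) (hA0 : A 0 = 0)
    (t : ℝ) : A t = 0 := by
  let L : ℝ → Matrix n n ℝ →L[ℝ] Matrix n n ℝ := fun s =>
    LinearMap.toContinuousLinearMap (LinearMap.mulLeft ℝ (J s) + LinearMap.mulRight ℝ (J s)ᵀ)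
  have hL : Continuous L := continuous_clm_apply.mpr fun B =>
    (hJ.matrix_mul continuous_const).add (continuous_const.matrix_mul hJ.matrix_transpose)
  exact eq_zero_of_hasDerivAt_clm_apply hL hA hA0 t

theorem mul_mul_transpose_eq_of_hasDerivAt {J U Q : ℝ → Matrix n n ℝ} (hJ : Continuous J)
    (hU : ∀ s, HasDerivAt U (J s * U s) s)
    (hQ : ∀ s, HasDerivAt Q (J s * Q s + Q s * (J s)ᵀ) s) (hU0 : U 0 = 1) (t : ℝ) :
    U t * Q 0 * (U t)ᵀ = Q t := by
  refine sub_eq_zero.mp (eq_zero_of_hasDerivAt_mul_add_mul_transpose (A := fun s =>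
    U s * Q 0 * (U s)ᵀ - Q s) hJ (fun s => ?_) (by simp [hU0]) t)
  refine ((((hU s).matrix_mul (hasDerivAt_const s (Q 0))).matrix_mul
    (hU s).matrix_transpose).sub (hQ s)).congr_deriv ?_
  rw [transpose_mul, Matrix.mul_zero, add_zero]
  noncomm_ring

end Matrix

section Flow

variable {E : Type*} [NormedAddCommGroup E] [NormedSpace ℝ E] {Φ : ℝ × E → E}

theorem hasDerivAt_fderiv_apply_one_zero {F : Type*} [NormedAddCommGroup F] [NormedSpace ℝ F]
    {Ψ : ℝ × E → F} {t : ℝ} {z : E} (hΨ : DifferentiableAt ℝ Ψ (t, z)) :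
    HasDerivAt (fun s => Ψ (s, z)) (fderiv ℝ Ψ (t, z) (1, 0)) t :=
  hΨ.hasFDerivAt.comp_hasDerivAt t ((hasDerivAt_id t).prodMk (hasDerivAt_const t z))

theorem hasDerivAt_fderiv_flow {f : E → E} (hΦ : ContDiff ℝ 2 Φ) (hf : Differentiable ℝ f)
    (hflow : ∀ p, fderiv ℝ Φ p (1, 0) = f (Φ p)) (t : ℝ) (z : E) :
    HasDerivAt (fun s => fderiv ℝ (fun w => Φ (s, w)) z)
      ((fderiv ℝ f (Φ (t, z))).comp (fderiv ℝ (fun w => Φ (t, w)) z)) t := by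
  have hΦ' : ContDiff ℝ 1 (fderiv ℝ Φ) := hΦ.fderiv_right (by norm_num)
  have hdiff : Differentiable ℝ Φ := hΦ.differentiable two_ne_zero
  have hpartial : ∀ s, fderiv ℝ (fun w => Φ (s, w)) z
      = (fderiv ℝ Φ (s, z)).comp (ContinuousLinearMap.inr ℝ ℝ E) := fun s =>
    ((hdiff _).hasFDerivAt.comp z (hasFDerivAt_prodMk_right s z)).fderiv
  have htime := hasDerivAt_fderiv_apply_one_zero (hΦ'.differentiable one_ne_zero (t, z))
  simp_rw [hpartial]
  refine (htime.clm_comp (hasDerivAt_const t (ContinuousLinearMap.inr ℝ ℝ E))).congr_deriv ?_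
  ext v
  -- exchange the two derivatives, then differentiate `p ↦ DΦ(p)(1, 0) = f (Φ p)` in space
  have hsymm := (hΦ.contDiffAt (x := (t, z))).isSymmSndFDerivAt (by simp) (0, v) (1, 0)
  have hclm : fderiv ℝ (fun p => fderiv ℝ Φ p (1, 0)) (t, z) (0, v)
      = fderiv ℝ (fderiv ℝ Φ) (t, z) (0, v) (1, 0) := by
    rw [fderiv_clm_apply (hΦ'.differentiable one_ne_zero _) (differentiableAt_const _)]
    simp
  have hcomp : fderiv ℝ (fun p => fderiv ℝ Φ p (1, 0)) (t, z)
      = (fderiv ℝ f (Φ (t, z))).comp (fderiv ℝ Φ (t, z)) := by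
    rw [funext hflow]
    exact fderiv_comp (t, z) (hf _) (hdiff _)
  simp only [ContinuousLinearMap.comp_apply, ContinuousLinearMap.comp_zero, add_zero,
    ContinuousLinearMap.inr_apply]
  rw [← hsymm, ← hclm, hcomp, ContinuousLinearMap.comp_apply]

end Flow

section Coordinates

variable {m : ℕ}

theorem fderiv_apply_eq_sum_pd (g : (Fin m → ℝ) → ℝ) (w v : Fin m → ℝ) :
    fderiv ℝ g w v = ∑ l, v l * pd l g w := by
  conv_lhs => rw [pi_eq_sum_univ' v]
  simp [pd, map_sum]

theorem jacobian_eq_toMatrix' (ψ : (Fin m → ℝ) → Fin m → ℝ) (z : Fin m → ℝ) :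
    jacobian ψ z = LinearMap.toMatrix' (fderiv ℝ ψ z : (Fin m → ℝ) →ₗ[ℝ] Fin m → ℝ) := by
  ext i j
  rfl

theorem jacobian_apply_eq_pd {ψ : (Fin m → ℝ) → Fin m → ℝ} {z : Fin m → ℝ}
    (hψ : DifferentiableAt ℝ ψ z) (i j : Fin m) :
    jacobian ψ z i j = pd j (fun w => ψ w i) z := by
  rw [jacobian, pd, (hasFDerivAt_pi'.mp hψ.hasFDerivAt i).fderiv]
  rfl

theorem jacobian_id (z : Fin m → ℝ) : jacobian id z = 1 := by
  ext i j
  simp [jacobian, Matrix.one_apply, Pi.single_apply]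

theorem continuous_jacobian {ψ : (Fin m → ℝ) → Fin m → ℝ} (hψ : ContDiff ℝ 1 ψ) :
    Continuous (jacobian ψ) :=
  continuous_matrix fun i _ =>
    (continuous_apply i).comp ((hψ.continuous_fderiv one_ne_zero).clm_apply continuous_const)

theorem hasDerivAt_jacobian_flow {Φ : ℝ × (Fin m → ℝ) → Fin m → ℝ} {f : (Fin m → ℝ) → Fin m → ℝ}
    (hΦ : ContDiff ℝ 2 Φ) (hf : Differentiable ℝ f)
    (hflow : ∀ p, fderiv ℝ Φ p (1, 0) = f (Φ p)) (t : ℝ) (z : Fin m → ℝ) :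
    HasDerivAt (fun s => jacobian (fun w => Φ (s, w)) z)
      (jacobian f (Φ (t, z)) * jacobian (fun w => Φ (t, w)) z) t := by
  rw [Matrix.hasDerivAt_iff]
  intro i j
  have h := hasDerivAt_pi.mp ((hasDerivAt_fderiv_flow hΦ hf hflow t z).clm_apply
    (hasDerivAt_const t (Pi.single j (1 : ℝ)))) i
  simp only [jacobian_eq_toMatrix', ← LinearMap.toMatrix'_comp]
  simpa using h

noncomputable def pdMatrix (l : Fin m) (P : (Fin m → ℝ) → Matrix (Fin m) (Fin m) ℝ)
    (z : Fin m → ℝ) : Matrix (Fin m) (Fin m) ℝ :=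
  of fun i j => pd l (fun w => P w i j) z

variable {P : (Fin m → ℝ) → Matrix (Fin m) (Fin m) ℝ}

theorem hasDerivAt_matrix_comp (hP : ∀ i j, Differentiable ℝ fun w => P w i j)
    {γ : ℝ → Fin m → ℝ} {v : Fin m → ℝ} {t : ℝ} (hγ : HasDerivAt γ v t) :
    HasDerivAt (fun s => P (γ s)) (∑ l, v l • pdMatrix l P (γ t)) t := by
  rw [Matrix.hasDerivAt_iff]
  intro i j
  have h := (hP i j (γ t)).hasFDerivAt.comp_hasDerivAt t hγ
  rw [fderiv_apply_eq_sum_pd] at h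
  refine h.congr_deriv ?_
  simp [Matrix.sum_apply, pdMatrix]

theorem pdMatrix_transpose (hskew : ∀ z, (P z)ᵀ = -P z) (l : Fin m) (z : Fin m → ℝ) :
    (pdMatrix l P z)ᵀ = -pdMatrix l P z := by
  ext i j
  have hentry : (fun w => P w j i) = fun w => -P w i j :=
    funext fun w => by simpa using congrFun (congrFun (hskew w) i) j
  simp [pdMatrix, pd, hentry, fderiv_fun_neg]

theorem jacobian_mulVec {g : (Fin m → ℝ) → Fin m → ℝ}
    (hP : ∀ i j, Differentiable ℝ fun w => P w i j) (hg : Differentiable ℝ g) (z : Fin m → ℝ) :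
    jacobian (fun w => P w *ᵥ g w) z
      = of (fun i k => (pdMatrix k P z *ᵥ g z) i) + P z * jacobian g z := by
  have hcoord : ∀ i, HasFDerivAt (fun w => (P w *ᵥ g w) i)
      (∑ r, (P z i r • fderiv ℝ (fun w => g w r) z + g z r • fderiv ℝ (fun w => P w i r) z)) z :=
    fun i => HasFDerivAt.fun_sum (u := univ) fun r _ =>
      (hP i r z).hasFDerivAt.fun_mul (differentiableAt_pi.mp (hg z) r).hasFDerivAt
  ext i k
  rw [jacobian_apply_eq_pd (differentiableAt_pi.mpr fun i => (hcoord i).differentiableAt), pd,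
    (hcoord i).fderiv]
  simp only [sum_add_distrib, _root_.add_apply, _root_.sum_apply, _root_.smul_apply, smul_eq_mul,
    mulVec, dotProduct, pdMatrix, pd, of_apply, mul_comm, Matrix.add_apply, Matrix.mul_apply,
    jacobian_apply_eq_pd (hg z)]
  exact add_comm _ _

end Coordinates

/-- Here `D l` plays `∂Π/∂z^l`, `S` the Hessian of `H` and `h` the gradient `∇H`: the right side
is `DX Π + Π DXᵀ` for the vector field `X = Π h`. -/
theorem sum_smul_eq_mul_add_mul_transpose_of_jacobi {n R : Type*} [Fintype n] [CommRing R]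
    {P S : Matrix n n R} {D : n → Matrix n n R} (h : n → R)
    (hP : Pᵀ = -P) (hD : ∀ l, (D l)ᵀ = -D l) (hS : Sᵀ = S)
    (hjacobi : ∀ i j k, ∑ l, (P i l * D l j k + P k l * D l i j + P j l * D l k i) = 0) :
    ∑ l, (P *ᵥ h) l • D l
      = (of (fun i k => (D k *ᵥ h) i) + P * S) * P
        + P * (of (fun i k => (D k *ᵥ h) i) + P * S)ᵀ := by
  have hskew : ∀ a b, P b a = -P a b := fun a b => by simpa using congrFun (congrFun hP a) b
  have hDskew : ∀ l a b, D l b a = -D l a b := fun l a b => by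
    simpa using congrFun (congrFun (hD l) a) b
  -- the Hessian terms cancel by skew-symmetry of `P`
  have hhess : P * S * P + P * (P * S)ᵀ = 0 := by
    rw [transpose_mul, hS, hP, Matrix.mul_neg, Matrix.mul_neg, Matrix.mul_assoc, add_neg_cancel]
  -- the remaining terms are the Jacobi identity, contracted with `h`
  have hcontract : ∀ i j r, ∑ l, P l r * D l i j = ∑ k, (D k i r * P k j + P i k * D k j r) := by
    intro i j r
    calc ∑ l, P l r * D l i j
        = ∑ l, (P l r * D l i j + (P i l * D l j r + P r l * D l i j + P j l * D l r i)) := by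
          rw [sum_add_distrib, hjacobi, add_zero]
      _ = _ := sum_congr rfl fun l _ => by rw [hskew l r, hskew l j, hDskew l i r]; ring
  rw [add_mul, transpose_add, Matrix.mul_add, add_add_add_comm, hhess, add_zero]
  ext i j
  simp only [Matrix.sum_apply, Matrix.smul_apply, smul_eq_mul, Matrix.add_apply, mul_apply,
    transpose_apply, of_apply, mulVec, dotProduct]
  calc ∑ l, (∑ r, P l r * h r) * D l i j = ∑ r, h r * ∑ l, P l r * D l i j := by
        simp only [sum_mul, mul_sum]
        rw [sum_comm]
        exact sum_congr rfl fun r _ => sum_congr rfl fun l _ => by ring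
    _ = ∑ r, h r * ∑ k, (D k i r * P k j + P i k * D k j r) := by simp only [hcontract]
    _ = _ := by
        simp only [sum_mul, mul_sum, ← sum_add_distrib]
        rw [sum_comm]
        exact sum_congr rfl fun k _ => sum_congr rfl fun r _ => by ring

section Hamiltonian

variable {m : ℕ} {H : (Fin m → ℝ) → ℝ}

theorem contDiff_grad (hH : ContDiff ℝ 2 H) : ContDiff ℝ 1 (grad H) :=
  contDiff_pi.mpr fun _ => (hH.fderiv_right (by norm_num)).clm_apply contDiff_const

theorem jacobian_grad_transpose (hH : ContDiff ℝ 2 H) (z : Fin m → ℝ) :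
    (jacobian (grad H) z)ᵀ = jacobian (grad H) z := by
  have hH' : ContDiff ℝ 1 (fderiv ℝ H) := hH.fderiv_right (by norm_num)
  have hsecond : ∀ a b, jacobian (grad H) z a b
      = fderiv ℝ (fderiv ℝ H) z (Pi.single b 1) (Pi.single a 1) := fun a b => by
    rw [jacobian_apply_eq_pd ((contDiff_grad hH).differentiable one_ne_zero z), pd]
    simp only [grad]
    rw [fderiv_clm_apply (hH'.differentiable one_ne_zero z) (differentiableAt_const _)]
    simp
  ext a b
  rw [transpose_apply, hsecond, hsecond]
  exact hH.contDiffAt.isSymmSndFDerivAt (by simp) _ _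

noncomputable def hamiltonianVectorField (P : (Fin m → ℝ) → Matrix (Fin m) (Fin m) ℝ)
    (H : (Fin m → ℝ) → ℝ) (z : Fin m → ℝ) : Fin m → ℝ :=
  P z *ᵥ grad H z

variable {P : (Fin m → ℝ) → Matrix (Fin m) (Fin m) ℝ}

theorem contDiff_hamiltonianVectorField (hP : ∀ i j, ContDiff ℝ 1 fun z => P z i j)
    (hH : ContDiff ℝ 2 H) : ContDiff ℝ 1 (hamiltonianVectorField P H) :=
  contDiff_pi.mpr fun i => ContDiff.sum (s := univ) fun r _ =>
    (hP i r).mul (contDiff_pi.mp (contDiff_grad hH) r)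

theorem sum_hamiltonianVectorField_smul_pdMatrix (hP : ∀ i j, ContDiff ℝ 1 fun z => P z i j)
    (hskew : ∀ z, (P z)ᵀ = -(P z))
    (hjacobi : ∀ (i j k : Fin m) (z : Fin m → ℝ),
      ∑ l : Fin m, (P z i l * pd l (fun w => P w j k) z
        + P z k l * pd l (fun w => P w i j) z
        + P z j l * pd l (fun w => P w k i) z) = 0)
    (hH : ContDiff ℝ 2 H) (z : Fin m → ℝ) :
    ∑ l, hamiltonianVectorField P H z l • pdMatrix l P z
      = jacobian (hamiltonianVectorField P H) z * P z
        + P z * (jacobian (hamiltonianVectorField P H) z)ᵀ := by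
  have hP' : ∀ i j, Differentiable ℝ fun z => P z i j := fun i j =>
    (hP i j).differentiable one_ne_zero
  rw [show hamiltonianVectorField P H = fun w => P w *ᵥ grad H w from rfl,
    jacobian_mulVec hP' ((contDiff_grad hH).differentiable one_ne_zero)]
  exact sum_smul_eq_mul_add_mul_transpose_of_jacobi (grad H z) (hskew z)
    (pdMatrix_transpose hskew · z) (jacobian_grad_transpose hH z) (hjacobi · · · z)

end Hamiltonian

/-- The flow of a Hamiltonian system on a Poisson manifold `(ℝ^m, Π)` (with `Π` a `C¹`,
pointwise skew-symmetric structure matrix satisfying the coordinate Jacobi identity)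
preserves the Poisson structure: `D_zΦ(t,z) Π(z) D_zΦ(t,z)ᵀ = Π(Φ(t,z))`. -/
theorem hamiltonian_flow_is_poisson {m : ℕ}
    (P : (Fin m → ℝ) → Matrix (Fin m) (Fin m) ℝ)
    (hPC1 : ∀ i j, ContDiff ℝ 1 fun z => P z i j)
    (hskew : ∀ z, (P z)ᵀ = -(P z))
    (hjacobi : ∀ (i j k : Fin m) (z : Fin m → ℝ),
      ∑ l : Fin m, (P z i l * pd l (fun w => P w j k) z
        + P z k l * pd l (fun w => P w i j) z
        + P z j l * pd l (fun w => P w k i) z) = 0)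
    (H : (Fin m → ℝ) → ℝ) (hH : ContDiff ℝ 2 H)
    (Φ : ℝ × (Fin m → ℝ) → (Fin m → ℝ)) (hΦ : ContDiff ℝ 2 Φ)
    (hΦ₀ : ∀ z, Φ (0, z) = z)
    (hflow : ∀ (t : ℝ) (z : Fin m → ℝ),
      deriv (fun s => Φ (s, z)) t = P (Φ (t, z)) *ᵥ grad H (Φ (t, z)))
    (t : ℝ) (z : Fin m → ℝ) :
    jacobian (fun w => Φ (t, w)) z * P z * (jacobian (fun w => Φ (t, w)) z)ᵀ
      = P (Φ (t, z)) := by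
  set f := hamiltonianVectorField P H
  have hf : ContDiff ℝ 1 f := contDiff_hamiltonianVectorField hPC1 hH
  have hΦd : Differentiable ℝ Φ := hΦ.differentiable two_ne_zero
  have htime : ∀ p, fderiv ℝ Φ p (1, 0) = f (Φ p) := fun ⟨s, w⟩ =>
    (hasDerivAt_fderiv_apply_one_zero (hΦd _)).deriv.symm.trans (hflow s w)
  have hpoisson : ∀ s, HasDerivAt (fun s => P (Φ (s, z)))
      (jacobian f (Φ (s, z)) * P (Φ (s, z)) + P (Φ (s, z)) * (jacobian f (Φ (s, z)))ᵀ) s :=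
    fun s => by
      rw [← sum_hamiltonianVectorField_smul_pdMatrix hPC1 hskew hjacobi hH]
      exact hasDerivAt_matrix_comp (fun i j => (hPC1 i j).differentiable one_ne_zero)
        ((hasDerivAt_fderiv_apply_one_zero (hΦd _)).congr_deriv (htime _))
  have hinit : jacobian (fun w => Φ (0, w)) z = 1 := by
    rw [show (fun w => Φ (0, w)) = id from funext hΦ₀, jacobian_id]
  simpa [hΦ₀] using mul_mul_transpose_eq_of_hasDerivAt
    ((continuous_jacobian hf).comp (hΦ.continuous.comp (Continuous.prodMk_left z)))
    (hasDerivAt_jacobian_flow hΦ (hf.differentiable one_ne_zero) htime · z) hpoisson hinit t
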